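/- arXiv:2109.14555 — 7 statements merged into one kernel-verified Lean document; each statement's English description precedes it below -/
import Mathlib

section
/- For constants L_0,...,L_k ≥ 0 with L_0 > 0 and p_0,...,p_k ∈ (0,1], the function f(x) = Σ_{l=0}^{k} L_l · exp(-Σ_{t=0}^{l} x_t) · Π_{t=0}^{l} p_t over nonnegative vectors x with Σ x_t ≤ B is minimized by placing the entire budget on the first coordinate, i.e., x* = (B,0,...,0), and the minimum value is e^{-B} · Σ_{l=0}^{k} L_l Π_{t=0}^{l} p_t. -/
/-- in a series chain, placing the whole budget on the first node is optimal,
with minimum value `e^{-B} · Σ_l L_l Π_{t≤l} p_t`. -/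
theorem series_chain_full_budget_on_first_node_optimal
    (k : ℕ) (L p : Fin (k+1) → ℝ)
    (hL : ∀ l, 0 ≤ L l) (hL0 : 0 < L 0)
    (hp : ∀ t, p t ∈ Set.Ioc (0:ℝ) 1) (B : ℝ) (hB : 0 ≤ B) :
    (∑ l, L l *
        Real.exp (-(∑ t ∈ Finset.Iic l, (fun s : Fin (k+1) => if s = 0 then B else 0) t)) *
        ∏ t ∈ Finset.Iic l, p t)
      = Real.exp (-B) * ∑ l, L l * ∏ t ∈ Finset.Iic l, p t ∧
    ∀ x : Fin (k+1) → ℝ, (∀ t, 0 ≤ x t) → (∑ t, x t) ≤ B →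
      Real.exp (-B) * ∑ l, L l * ∏ t ∈ Finset.Iic l, p t ≤
        ∑ l, L l * Real.exp (-(∑ t ∈ Finset.Iic l, x t)) * ∏ t ∈ Finset.Iic l, p t := by
  constructor
  · rw [Finset.mul_sum]
    refine Finset.sum_congr rfl fun l _ => ?_
    have h0 : (0 : Fin (k+1)) ∈ Finset.Iic l := Finset.mem_Iic.mpr (Fin.zero_le l)
    have : (∑ t ∈ Finset.Iic l, (fun s : Fin (k+1) => if s = 0 then B else 0) t) = B := by
      rw [Finset.sum_eq_single (0 : Fin (k+1))]
      · simp
      · intro b _ hb; simp [hb]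
      · intro h; exact absurd h0 h
    rw [this]; ring
  · intro x hx hxB
    rw [Finset.mul_sum]
    refine Finset.sum_le_sum fun l _ => ?_
    have hprod : 0 ≤ ∏ t ∈ Finset.Iic l, p t :=
      Finset.prod_nonneg fun t _ => (hp t).1.le
    have hsum : ∑ t ∈ Finset.Iic l, x t ≤ B :=
      le_trans (Finset.sum_le_sum_of_subset_of_nonneg (Finset.subset_univ _)
        (fun t _ _ => hx t)) hxB
    have hexp : Real.exp (-B) ≤ Real.exp (-(∑ t ∈ Finset.Iic l, x t)) :=
      Real.exp_le_exp.mpr (by linarith)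
    calc Real.exp (-B) * (L l * ∏ t ∈ Finset.Iic l, p t)
        ≤ Real.exp (-(∑ t ∈ Finset.Iic l, x t)) * (L l * ∏ t ∈ Finset.Iic l, p t) := by
          apply mul_le_mul_of_nonneg_right hexp
          exact mul_nonneg (hL l) hprod
      _ = L l * Real.exp (-(∑ t ∈ Finset.Iic l, x t)) * ∏ t ∈ Finset.Iic l, p t := by ring
end

section
/- Let f(x) = Σ_{l=0}^{k} L_l · Π_{t=0}^{l} p_t e^{-x_t} with L_l ≥ 0, not all zero, and p_t ∈ (0,1]. If x is a feasible investment vector (nonnegative, Σ x_t ≤ B) with x_j > 0 for some j ≥ 1, then the vector x̃ obtained by setting x̃_0 = x_0 + x_j, x̃_j = 0, and x̃_t = x_t otherwise, satisfies f(x̃) ≤ f(x), with strict inequality whenever L_l Π_{t≤l} p_t > 0 for some l < j. -/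
/-- shifting a positive investment from an interior node `j ≥ 1` of a series
chain to the first node weakly decreases the expected loss, strictly if some term before `j`
has positive compound loss. -/
theorem series_chain_shift_investment_to_first_node
    (k : ℕ) (L p : Fin (k+1) → ℝ)
    (hL : ∀ l, 0 ≤ L l) (hLne : ∃ l, L l ≠ 0)
    (hp : ∀ t, p t ∈ Set.Ioc (0:ℝ) 1) (B : ℝ)
    (x : Fin (k+1) → ℝ) (hx : ∀ t, 0 ≤ x t) (hxB : ∑ t, x t ≤ B)
    (j : Fin (k+1)) (hj : j ≠ 0) (hxj : 0 < x j) :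
    let f : (Fin (k+1) → ℝ) → ℝ := fun y =>
      ∑ l, L l * ∏ t ∈ Finset.Iic l, (p t * Real.exp (-(y t)))
    let xt : Fin (k+1) → ℝ := Function.update (Function.update x j 0) 0 (x 0 + x j)
    f xt ≤ f x ∧
      ((∃ l, l < j ∧ 0 < L l * ∏ t ∈ Finset.Iic l, p t) → f xt < f x) := by
  intro f xt
  have hsum : ∀ l : Fin (k+1), ∑ t ∈ Finset.Iic l, xt t
      = ∑ t ∈ Finset.Iic l, x t + (if l < j then x j else 0) := by
    intro l
    have h0 : (0 : Fin (k+1)) ∈ Finset.Iic l := Finset.mem_Iic.mpr (Fin.zero_le l)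
    have hxt : ∑ t ∈ Finset.Iic l, xt t
        = (x 0 + x j) + ∑ t ∈ Finset.Iic l \ {0}, Function.update x j 0 t :=
      Finset.sum_update_of_mem h0 (Function.update x j 0) (x 0 + x j)
    by_cases hlj : l < j
    · have hjnot : j ∉ Finset.Iic l \ {0} := by
        simp only [Finset.mem_sdiff, Finset.mem_Iic, not_and]
        intro h; exact absurd h (not_le.mpr hlj)
      rw [hxt, Finset.sum_update_of_notMem hjnot, if_pos hlj,
        Finset.sum_eq_sum_sdiff_singleton_add h0 x]
      ring
    · have hjmem : j ∈ Finset.Iic l \ {0} := by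
        simp [Finset.mem_Iic, not_lt.mp hlj, hj]
      rw [hxt, Finset.sum_update_of_mem hjmem, if_neg hlj,
        Finset.sum_eq_sum_sdiff_singleton_add h0 x,
        Finset.sum_eq_sum_sdiff_singleton_add hjmem x]
      ring
  have hf : ∀ y : Fin (k+1) → ℝ, f y = ∑ l, L l *
      ((∏ t ∈ Finset.Iic l, p t) * Real.exp (-∑ t ∈ Finset.Iic l, y t)) := by
    intro y
    refine Finset.sum_congr rfl fun l _ => ?_
    rw [Finset.prod_mul_distrib, ← Real.exp_sum, Finset.sum_neg_distrib]
  have hP : ∀ l : Fin (k+1), 0 < ∏ t ∈ Finset.Iic l, p t :=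
    fun l => Finset.prod_pos fun t _ => (hp t).1
  have hterm : ∀ l : Fin (k+1),
      L l * ((∏ t ∈ Finset.Iic l, p t) * Real.exp (-∑ t ∈ Finset.Iic l, xt t))
      ≤ L l * ((∏ t ∈ Finset.Iic l, p t) * Real.exp (-∑ t ∈ Finset.Iic l, x t)) := by
    intro l
    have : Real.exp (-∑ t ∈ Finset.Iic l, xt t) ≤ Real.exp (-∑ t ∈ Finset.Iic l, x t) := by
      apply Real.exp_le_exp.mpr
      rw [hsum l]
      have : (0:ℝ) ≤ (if l < j then x j else 0) := by positivity
      linarith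
    exact mul_le_mul_of_nonneg_left (mul_le_mul_of_nonneg_left this (hP l).le) (hL l)
  rw [hf xt, hf x]
  constructor
  · exact Finset.sum_le_sum fun l _ => hterm l
  · rintro ⟨l0, hl0j, hl0pos⟩
    apply Finset.sum_lt_sum (fun l _ => hterm l)
    refine ⟨l0, Finset.mem_univ l0, ?_⟩
    have hstrict : Real.exp (-∑ t ∈ Finset.Iic l0, xt t)
        < Real.exp (-∑ t ∈ Finset.Iic l0, x t) := by
      apply Real.exp_lt_exp.mpr
      rw [hsum l0, if_pos hl0j]
      linarith
    calc L l0 * ((∏ t ∈ Finset.Iic l0, p t) * Real.exp (-∑ t ∈ Finset.Iic l0, xt t))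
        = (L l0 * ∏ t ∈ Finset.Iic l0, p t) * Real.exp (-∑ t ∈ Finset.Iic l0, xt t) := by ring
      _ < (L l0 * ∏ t ∈ Finset.Iic l0, p t) * Real.exp (-∑ t ∈ Finset.Iic l0, x t) :=
          (mul_lt_mul_of_pos_left hstrict hl0pos)
      _ = L l0 * ((∏ t ∈ Finset.Iic l0, p t) * Real.exp (-∑ t ∈ Finset.Iic l0, x t)) := by ring
end

section
/- The minimal expected loss of a series chain with nodes of losses L_0,...,L_k and probabilities p_0,...,p_k under budget B equals the minimal expected loss of a single node with loss L' = Σ_{l=0}^{k} L_l Π_{t=0}^{l} p_t, baseline probability 1, under the same budget B; both equal L' e^{-B}. -/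
/-- the minimal expected loss of a series chain under budget `B` equals the
minimal expected loss of a single node with loss `L' = Σ_l L_l Π_{t≤l} p_t` and baseline
probability 1 under the same budget; both equal `L' e^{-B}`. -/
theorem series_chain_equivalent_to_single_node
    (k : ℕ) (L p : Fin (k+1) → ℝ)
    (hL : ∀ l, 0 ≤ L l) (hp : ∀ t, p t ∈ Set.Ioc (0:ℝ) 1) (B : ℝ) (hB : 0 ≤ B) :
    IsLeast {y : ℝ | ∃ x : Fin (k+1) → ℝ, (∀ t, 0 ≤ x t) ∧ (∑ t, x t) ≤ B ∧
        y = ∑ l, L l * ∏ t ∈ Finset.Iic l, (p t * Real.exp (-(x t)))}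
      ((∑ l, L l * ∏ t ∈ Finset.Iic l, p t) * Real.exp (-B)) ∧
    IsLeast {y : ℝ | ∃ x : ℝ, 0 ≤ x ∧ x ≤ B ∧
        y = (∑ l, L l * ∏ t ∈ Finset.Iic l, p t) * 1 * Real.exp (-x)}
      ((∑ l, L l * ∏ t ∈ Finset.Iic l, p t) * Real.exp (-B)) := by
  have hL'0 : 0 ≤ ∑ l, L l * ∏ t ∈ Finset.Iic l, p t :=
    Finset.sum_nonneg fun l _ =>
      mul_nonneg (hL l) (Finset.prod_nonneg fun t _ => (hp t).1.le)
  constructor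
  · constructor
    · refine ⟨fun t => if t = 0 then B else 0, fun t => ?_, ?_, ?_⟩
      · dsimp only; split <;> simp [hB]
      · simp
      · rw [Finset.sum_mul]
        refine Finset.sum_congr rfl fun l _ => ?_
        rw [Finset.prod_mul_distrib, mul_assoc]
        congr 1
        congr 1
        rw [← Real.exp_sum]
        congr 1
        simp [apply_ite Neg.neg, Finset.sum_ite_eq', Fin.zero_le]
    · rintro y ⟨x, hx0, hxB, rfl⟩
      rw [Finset.sum_mul]
      refine Finset.sum_le_sum fun l _ => ?_
      rw [Finset.prod_mul_distrib, mul_assoc]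
      refine mul_le_mul_of_nonneg_left ?_ (hL l)
      refine mul_le_mul_of_nonneg_left ?_
        (Finset.prod_nonneg fun t _ => (hp t).1.le)
      rw [← Real.exp_sum, Real.exp_le_exp]
      have h1 : ∑ t ∈ Finset.Iic l, x t ≤ ∑ t, x t :=
        Finset.sum_le_sum_of_subset_of_nonneg (Finset.subset_univ _)
          (fun t _ _ => hx0 t)
      have : ∑ t ∈ Finset.Iic l, -(x t) = -(∑ t ∈ Finset.Iic l, x t) := by
        simp
      rw [this]
      linarith
  · constructor
    · exact ⟨B, hB, le_rfl, by ring⟩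
    · rintro y ⟨x, hx0, hxB, rfl⟩
      rw [mul_one]
      exact mul_le_mul_of_nonneg_left (Real.exp_le_exp.2 (by linarith)) hL'0
end

section
/- For two parallel series paths from a common source to a common target, if the defender invests the entire budget on the common source node, the attacker's best response achieves max over the two paths of their uninvested compound losses, scaled by e^{-B}: i.e., min over feasible x of max_{j∈{1,2}} (L_1 p_0 e^{-x_0} + L_j p_0 p_j e^{-x_0-x_j} + L_g p_0 p_j p_g e^{-x_0-x_j-x_g}) equals e^{-B} · max_j (L_1 p_0 + L_j p_0 p_j + L_g p_0 p_j p_g), where the max and min are over nonnegative investments summing to at most B (investments x_0 on the source, x_j on each middle node j, x_g on the target), given p_0, p_1, p_2, p_g ∈ (0,1] and L_1, L_2, L_g ≥ 0 with L_g > 0. -/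
/-- in a diamond attack graph (common source, two parallel middle nodes,
common target), the defender's min–max value equals `e^{-B}` times the max over the two
paths of their uninvested compound losses. -/
theorem diamond_minmax_value
    (p0 p1 p2 pg Le L1 L2 Lg B : ℝ)
    (hp0 : p0 ∈ Set.Ioc (0:ℝ) 1) (hp1 : p1 ∈ Set.Ioc (0:ℝ) 1)
    (hp2 : p2 ∈ Set.Ioc (0:ℝ) 1) (hpg : pg ∈ Set.Ioc (0:ℝ) 1)
    (hLe : 0 ≤ Le) (hL1 : 0 ≤ L1) (hL2 : 0 ≤ L2) (hLg : 0 < Lg)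
    (hB : 0 ≤ B) :
    IsLeast {y : ℝ | ∃ x0 x1 x2 xg : ℝ,
        0 ≤ x0 ∧ 0 ≤ x1 ∧ 0 ≤ x2 ∧ 0 ≤ xg ∧ x0 + x1 + x2 + xg ≤ B ∧
        y = max
          (Le * p0 * Real.exp (-x0) + L1 * p0 * p1 * Real.exp (-x0 - x1)
            + Lg * p0 * p1 * pg * Real.exp (-x0 - x1 - xg))
          (Le * p0 * Real.exp (-x0) + L2 * p0 * p2 * Real.exp (-x0 - x2)
            + Lg * p0 * p2 * pg * Real.exp (-x0 - x2 - xg))}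
      (Real.exp (-B) * max (Le * p0 + L1 * p0 * p1 + Lg * p0 * p1 * pg)
        (Le * p0 + L2 * p0 * p2 + Lg * p0 * p2 * pg)) := by
  obtain ⟨hp0', _⟩ := hp0
  obtain ⟨hp1', _⟩ := hp1
  obtain ⟨hp2', _⟩ := hp2
  obtain ⟨hpg', _⟩ := hpg
  constructor
  · refine ⟨B, 0, 0, 0, hB, le_refl 0, le_refl 0, le_refl 0, by linarith, ?_⟩
    rw [mul_max_of_nonneg _ _ (Real.exp_pos (-B)).le]
    simp only [sub_zero]
    congr 1 <;> ring
  · rintro y ⟨x0, x1, x2, xg, h0, h1, h2, hg, hb, rfl⟩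
    rw [mul_max_of_nonneg _ _ (Real.exp_pos (-B)).le]
    have key : ∀ c t : ℝ, 0 ≤ c → t ≤ B → (c) * Real.exp (-B) ≤ c * Real.exp (-t) := by
      intro c t hc ht
      exact mul_le_mul_of_nonneg_left (Real.exp_le_exp.mpr (by linarith)) hc
    apply max_le_max
    · have e1 := key (Le * p0) x0 (by positivity) (by linarith)
      have e2 := key (L1 * p0 * p1) (x0 + x1) (by positivity) (by linarith)
      have e3 := key (Lg * p0 * p1 * pg) (x0 + x1 + xg) (by positivity) (by linarith)
      rw [show -x0 - x1 = -(x0 + x1) by ring, show -(x0 + x1) - xg = -(x0 + x1 + xg) by ring]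
      nlinarith [e1, e2, e3]
    · have e1 := key (Le * p0) x0 (by positivity) (by linarith)
      have e2 := key (L2 * p0 * p2) (x0 + x2) (by positivity) (by linarith)
      have e3 := key (Lg * p0 * p2 * pg) (x0 + x2 + xg) (by positivity) (by linarith)
      rw [show -x0 - x2 = -(x0 + x2) by ring, show -(x0 + x2) - xg = -(x0 + x2 + xg) by ring]
      nlinarith [e1, e2, e3]
end

section
/- In the min–max problem min_{x ≥ 0, Σx ≤ B} max{ a e^{-x_1} + c e^{-x_1 - x_2} , a e^{-x_4} + c e^{-x_4 - x_2} } with a, c > 0 and a ≤ c (two entry nodes feeding a common downstream node), an optimal solution is x_1 = x_4 = (B + log(a/c))/2, x_2 = -log(a/c) (assuming B ≥ log(c/a) so that x_1 ≥ 0), and the optimal value is 2 e^{-B/2} √(a c). -/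
lemma exp_half_log' {t : ℝ} (ht : 0 < t) : Real.exp (Real.log t / 2) = Real.sqrt t := by
  rw [← Real.log_sqrt ht.le, Real.exp_log (Real.sqrt_pos.2 ht)]

lemma mul_sqrt_div' {a c : ℝ} (ha : 0 < a) (hc : 0 < c) :
    a * Real.sqrt (c / a) = Real.sqrt (a * c) := by
  have h : c / a = (a * c) / a ^ 2 := by field_simp
  rw [h, Real.sqrt_div (by positivity), Real.sqrt_sq ha.le]
  field_simp

lemma amgm' {p q u : ℝ} (hp : 0 < p) (hq : 0 < q) (hu : 0 ≤ u) (h : u ^ 2 = p * q) :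
    2 * u ≤ p + q := by nlinarith [sq_nonneg (p - q)]

/-- for the two-entry-node min–max problem with `a ≤ c`, the point
`x1 = x4 = (B + log(a/c))/2`, `x2 = -log(a/c)` is feasible and optimal, with optimal
value `2 e^{-B/2} √(ac)`. -/
theorem two_input_minmax_optimal_solution
    (a c B : ℝ) (ha : 0 < a) (hc : 0 < c) (hac : a ≤ c)
    (hB : Real.log (c / a) ≤ B) :
    let g : ℝ → ℝ → ℝ → ℝ := fun x1 x4 x2 =>
      max (a * Real.exp (-x1) + c * Real.exp (-x1 - x2))
          (a * Real.exp (-x4) + c * Real.exp (-x4 - x2))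
    let x1 : ℝ := (B + Real.log (a / c)) / 2
    let x2 : ℝ := -Real.log (a / c)
    (0 ≤ x1 ∧ 0 ≤ x2 ∧ x1 + x1 + x2 ≤ B) ∧
    g x1 x1 x2 = 2 * Real.exp (-B / 2) * Real.sqrt (a * c) ∧
    ∀ y1 y4 y2 : ℝ, 0 ≤ y1 → 0 ≤ y4 → 0 ≤ y2 → y1 + y4 + y2 ≤ B →
      2 * Real.exp (-B / 2) * Real.sqrt (a * c) ≤ g y1 y4 y2 := by
  intro g x1 x2
  have hac1 : a / c ≤ 1 := (div_le_one hc).2 hac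
  have hl : Real.log (a / c) ≤ 0 := Real.log_nonpos (by positivity) hac1
  have hlog : Real.log (c / a) = - Real.log (a / c) := by
    rw [← Real.log_inv]; congr 1; rw [inv_div]
  have hBl : -Real.log (a / c) ≤ B := by rw [← hlog]; exact hB
  refine ⟨⟨by simp only [x1]; linarith, by simp only [x2]; linarith, by
      simp only [x1, x2]; linarith⟩, ?_, ?_⟩
  · -- value computation
    have h1 : -x1 = -B / 2 + Real.log (c / a) / 2 := by
      simp only [x1, hlog]; ring
    have h2 : -x1 - x2 = -B / 2 + Real.log (a / c) / 2 := by
      simp only [x1, x2]; ring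
    have e1 : Real.exp (-x1) = Real.exp (-B / 2) * Real.sqrt (c / a) := by
      rw [h1, Real.exp_add, exp_half_log' (div_pos hc ha)]
    have e2 : Real.exp (-x1 - x2) = Real.exp (-B / 2) * Real.sqrt (a / c) := by
      rw [h2, Real.exp_add, exp_half_log' (div_pos ha hc)]
    have k1 : a * Real.sqrt (c / a) = Real.sqrt (a * c) := mul_sqrt_div' ha hc
    have k2 : c * Real.sqrt (a / c) = Real.sqrt (a * c) := by
      rw [mul_sqrt_div' hc ha, mul_comm]
    simp only [g, max_self, e1, e2]
    linear_combination Real.exp (-B / 2) * k1 + Real.exp (-B / 2) * k2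
  · intro y1 y4 y2 hy1 hy4 hy2 hsum
    set s := y1 + y4 + y2 with hs
    set u := Real.sqrt (a * c) * Real.exp (-s / 2) with hu
    have hu0 : 0 ≤ u := by positivity
    have husq : u ^ 2 = a * c * Real.exp (-s) := by
      rw [hu, mul_pow, Real.sq_sqrt (by positivity), ← Real.exp_nat_mul]
      ring_nf
    have hes : Real.exp (-s) = Real.exp (-y1) * Real.exp (-y4 - y2) := by
      rw [← Real.exp_add]; congr 1; rw [hs]; ring
    have hes' : Real.exp (-s) = Real.exp (-y4) * Real.exp (-y1 - y2) := by
      rw [← Real.exp_add]; congr 1; rw [hs]; ring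
    have hpq : u ^ 2 = (a * Real.exp (-y1)) * (c * Real.exp (-y4 - y2)) := by
      rw [husq, hes]; ring
    have hpq' : u ^ 2 = (a * Real.exp (-y4)) * (c * Real.exp (-y1 - y2)) := by
      rw [husq, hes']; ring
    have i1 : 2 * u ≤ a * Real.exp (-y1) + c * Real.exp (-y4 - y2) :=
      amgm' (by positivity) (by positivity) hu0 hpq
    have i2 : 2 * u ≤ a * Real.exp (-y4) + c * Real.exp (-y1 - y2) :=
      amgm' (by positivity) (by positivity) hu0 hpq'
    have hmax : 2 * u ≤ g y1 y4 y2 := by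
      simp only [g]
      rcases le_max_iff.mp (le_refl (max (a * Real.exp (-y1) + c * Real.exp (-y1 - y2))
          (a * Real.exp (-y4) + c * Real.exp (-y4 - y2)))) with h | h
      · exact le_max_iff.mpr (by
          by_contra hcon
          push_neg at hcon
          linarith [hcon.1, hcon.2])
      · exact le_max_iff.mpr (by
          by_contra hcon
          push_neg at hcon
          linarith [hcon.1, hcon.2])
    have hue : 2 * Real.exp (-B / 2) * Real.sqrt (a * c) ≤ 2 * u := by
      rw [hu]
      have : Real.exp (-B / 2) ≤ Real.exp (-s / 2) :=
        Real.exp_le_exp.2 (by linarith)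
      nlinarith [Real.sqrt_nonneg (a * c)]
    linarith
end

section
/- In the parallel-paths game on a diamond graph, with investments x_0 on the common source, x_1, x_2 on the two parallel middle nodes and x_g on the common target, and compound losses a, b_1, b_2, c > 0, the minimum of max{a e^{-x_0} + b_1 e^{-x_0-x_1} + c e^{-x_0-x_1-x_g}, a e^{-x_0} + b_2 e^{-x_0-x_2} + c e^{-x_0-x_2-x_g}} over nonnegative x with Σ x ≤ B equals e^{-B}·max{a + b_1 + c, a + b_2 + c} and is achieved at x_0 = B, x_1 = x_2 = x_g = 0; in particular, any minimizer x* satisfies x*_1 = x*_2 = 0. -/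
/-- in the diamond-graph parallel-paths game, any optimal profile places zero
investment on the two parallel middle nodes; the value is `e^{-B}·max{a+b1+c, a+b2+c}`,
achieved at `x0 = B`, `x1 = x2 = xg = 0`. -/
theorem diamond_optimal_profile_zero_on_parallel_nodes
    (a b1 b2 c B : ℝ) (ha : 0 < a) (hb1 : 0 < b1) (hb2 : 0 < b2) (hc : 0 < c)
    (hB : 0 ≤ B) :
    let f : ℝ → ℝ → ℝ → ℝ → ℝ := fun x0 x1 x2 xg =>
      max (a * Real.exp (-x0) + b1 * Real.exp (-x0 - x1) + c * Real.exp (-x0 - x1 - xg))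
          (a * Real.exp (-x0) + b2 * Real.exp (-x0 - x2) + c * Real.exp (-x0 - x2 - xg))
    (∀ x0 x1 x2 xg : ℝ, 0 ≤ x0 → 0 ≤ x1 → 0 ≤ x2 → 0 ≤ xg → x0 + x1 + x2 + xg ≤ B →
      (∀ y0 y1 y2 yg : ℝ, 0 ≤ y0 → 0 ≤ y1 → 0 ≤ y2 → 0 ≤ yg → y0 + y1 + y2 + yg ≤ B →
        f x0 x1 x2 xg ≤ f y0 y1 y2 yg) →
      x1 = 0 ∧ x2 = 0) ∧
    f B 0 0 0 = Real.exp (-B) * max (a + b1 + c) (a + b2 + c) ∧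
    (∀ y0 y1 y2 yg : ℝ, 0 ≤ y0 → 0 ≤ y1 → 0 ≤ y2 → 0 ≤ yg → y0 + y1 + y2 + yg ≤ B →
      Real.exp (-B) * max (a + b1 + c) (a + b2 + c) ≤ f y0 y1 y2 yg) := by
  intro f
  have hval : f B 0 0 0 = Real.exp (-B) * max (a + b1 + c) (a + b2 + c) := by
    show max _ _ = _
    rw [sub_zero, sub_zero, mul_max_of_nonneg _ _ (Real.exp_pos (-B)).le]
    congr 1 <;> ring
  refine ⟨?_, hval, ?_⟩
  · intro x0 x1 x2 xg h0 h1 h2 hg hs hopt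
    by_contra hcon
    have hx0 : x0 < B := by
      rcases not_and_or.1 hcon with h | h
      · have : 0 < x1 := lt_of_le_of_ne h1 (Ne.symm h)
        linarith
      · have : 0 < x2 := lt_of_le_of_ne h2 (Ne.symm h)
        linarith
    have e0 : Real.exp (-B) < Real.exp (-x0) := Real.exp_lt_exp.2 (by linarith)
    have e1 : Real.exp (-B) ≤ Real.exp (-x0 - x1) := Real.exp_le_exp.2 (by linarith)
    have e2 : Real.exp (-B) ≤ Real.exp (-x0 - x1 - xg) := Real.exp_le_exp.2 (by linarith)
    have e3 : Real.exp (-B) ≤ Real.exp (-x0 - x2) := Real.exp_le_exp.2 (by linarith)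
    have e4 : Real.exp (-B) ≤ Real.exp (-x0 - x2 - xg) := Real.exp_le_exp.2 (by linarith)
    have hstrict : f B 0 0 0 < f x0 x1 x2 xg := by
      rw [hval]
      show _ < max _ _
      rw [mul_max_of_nonneg _ _ (Real.exp_pos (-B)).le]
      refine max_lt_max ?_ ?_
      · nlinarith [mul_lt_mul_of_pos_left e0 ha, mul_le_mul_of_nonneg_left e1 hb1.le,
          mul_le_mul_of_nonneg_left e2 hc.le]
      · nlinarith [mul_lt_mul_of_pos_left e0 ha, mul_le_mul_of_nonneg_left e3 hb2.le,
          mul_le_mul_of_nonneg_left e4 hc.le]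
    have := hopt B 0 0 0 hB le_rfl le_rfl le_rfl (by linarith)
    linarith
  · intro y0 y1 y2 yg h0 h1 h2 hg hs
    have e0 : Real.exp (-B) ≤ Real.exp (-y0) := Real.exp_le_exp.2 (by linarith)
    have e1 : Real.exp (-B) ≤ Real.exp (-y0 - y1) := Real.exp_le_exp.2 (by linarith)
    have e2 : Real.exp (-B) ≤ Real.exp (-y0 - y1 - yg) := Real.exp_le_exp.2 (by linarith)
    have e3 : Real.exp (-B) ≤ Real.exp (-y0 - y2) := Real.exp_le_exp.2 (by linarith)
    have e4 : Real.exp (-B) ≤ Real.exp (-y0 - y2 - yg) := Real.exp_le_exp.2 (by linarith)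
    show _ ≤ max _ _
    rw [mul_max_of_nonneg _ _ (Real.exp_pos (-B)).le]
    refine max_le_max ?_ ?_
    · nlinarith [mul_le_mul_of_nonneg_left e0 ha.le, mul_le_mul_of_nonneg_left e1 hb1.le,
        mul_le_mul_of_nonneg_left e2 hc.le]
    · nlinarith [mul_le_mul_of_nonneg_left e0 ha.le, mul_le_mul_of_nonneg_left e3 hb2.le,
        mul_le_mul_of_nonneg_left e4 hc.le]
end

section
/- Zero investment on the unique target node is optimal when the target lies at the end of every path: in the series-chain problem min_{x ≥ 0, Σ x ≤ B} Σ_{l=0}^{k} L_l Π_{t=0}^{l} p_t e^{-x_t}, every optimal solution with Σ_l L_l Π_t p_t > 0 and L_0 Π_{t=0}^{0} p_0 > 0 satisfies x*_k = 0 whenever k ≥ 1. -/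
/-- in the series-chain problem, every optimal solution places zero
investment on the final (target) node when `k ≥ 1`. -/
theorem optimal_investment_zero_on_target_node
    (k : ℕ) (hk : 1 ≤ k) (L p : Fin (k+1) → ℝ)
    (hL : ∀ l, 0 ≤ L l) (hp : ∀ t, p t ∈ Set.Ioc (0:ℝ) 1)
    (hL0 : 0 < L 0 * p 0)
    (hpos : 0 < ∑ l, L l * ∏ t ∈ Finset.Iic l, p t)
    (B : ℝ) (x : Fin (k+1) → ℝ)
    (hx : ∀ t, 0 ≤ x t) (hxB : ∑ t, x t ≤ B)
    (hopt : ∀ y : Fin (k+1) → ℝ, (∀ t, 0 ≤ y t) → ∑ t, y t ≤ B →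
      ∑ l, L l * ∏ t ∈ Finset.Iic l, (p t * Real.exp (-(x t))) ≤
        ∑ l, L l * ∏ t ∈ Finset.Iic l, (p t * Real.exp (-(y t)))) :
    x (Fin.last k) = 0 := by
  by_contra hne
  set ε := x (Fin.last k) with hεdef
  have hεpos : 0 < ε := lt_of_le_of_ne (hx _) (Ne.symm hne)
  have h0ne : (0 : Fin (k+1)) ≠ Fin.last k := by
    intro h
    have := congrArg Fin.val h
    simp only [Fin.val_zero, Fin.val_last] at this
    omega
  set y : Fin (k+1) → ℝ := fun t => if t = 0 then x 0 + ε else if t = Fin.last k then 0 else x t with hy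
  have hy0 : ∀ t, 0 ≤ y t := by
    intro t; simp only [hy]
    split_ifs
    · have := hx 0; linarith
    · exact le_refl 0
    · exact hx t
  have hpt : ∀ t, y t = x t + ((if t = 0 then ε else 0) + (if t = Fin.last k then -ε else 0)) := by
    intro t
    simp only [hy]
    split_ifs with h1 h2 h3
    · exact absurd (h1 ▸ h2 : (0:Fin (k+1)) = Fin.last k) h0ne
    · subst h1; ring
    · subst h3; ring
    · ring
  have hsum : ∀ s : Finset (Fin (k+1)), ∑ t ∈ s, y t =
      ∑ t ∈ s, x t + ((if (0:Fin (k+1)) ∈ s then ε else 0) + (if Fin.last k ∈ s then -ε else 0)) := by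
    intro s
    calc ∑ t ∈ s, y t
        = ∑ t ∈ s, (x t + ((if t = 0 then ε else 0) + (if t = Fin.last k then -ε else 0))) :=
          Finset.sum_congr rfl (fun t _ => hpt t)
      _ = ∑ t ∈ s, x t + ((∑ t ∈ s, if t = 0 then ε else 0) + ∑ t ∈ s, if t = Fin.last k then -ε else 0) := by
          rw [Finset.sum_add_distrib, Finset.sum_add_distrib]
      _ = _ := by
          rw [Finset.sum_ite_eq' s (0 : Fin (k+1)) (fun _ => ε),
            Finset.sum_ite_eq' s (Fin.last k) (fun _ => -ε)]
  have hyB : ∑ t, y t ≤ B := by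
    rw [hsum Finset.univ]
    simp only [Finset.mem_univ, if_true]
    linarith
  have key := hopt y hy0 hyB
  -- rewrite each term
  have hterm : ∀ (z : Fin (k+1) → ℝ) (l : Fin (k+1)),
      L l * ∏ t ∈ Finset.Iic l, (p t * Real.exp (-(z t))) =
      L l * ((∏ t ∈ Finset.Iic l, p t) * Real.exp (-(∑ t ∈ Finset.Iic l, z t))) := by
    intro z l
    rw [Finset.prod_mul_distrib, ← Real.exp_sum, ← Finset.sum_neg_distrib]
  have hsle : ∀ l : Fin (k+1), ∑ t ∈ Finset.Iic l, x t ≤ ∑ t ∈ Finset.Iic l, y t := by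
    intro l
    rw [hsum]
    have h0mem : (0 : Fin (k+1)) ∈ Finset.Iic l := Finset.mem_Iic.mpr (Fin.zero_le l)
    rw [if_pos h0mem]
    split_ifs <;> linarith
  have hstrict : ∑ t ∈ Finset.Iic (0 : Fin (k+1)), x t < ∑ t ∈ Finset.Iic (0 : Fin (k+1)), y t := by
    rw [hsum]
    have h0mem : (0 : Fin (k+1)) ∈ Finset.Iic (0 : Fin (k+1)) := Finset.mem_Iic.mpr le_rfl
    have hlmem : Fin.last k ∉ Finset.Iic (0 : Fin (k+1)) := by
      simp only [Finset.mem_Iic]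
      intro h
      exact h0ne (le_antisymm (Fin.zero_le _) h)
    rw [if_pos h0mem, if_neg hlmem]
    linarith
  have hprodpos : ∀ l : Fin (k+1), 0 < ∏ t ∈ Finset.Iic l, p t :=
    fun l => Finset.prod_pos (fun t _ => (hp t).1)
  have hlt : ∑ l, L l * ∏ t ∈ Finset.Iic l, (p t * Real.exp (-(y t))) <
      ∑ l, L l * ∏ t ∈ Finset.Iic l, (p t * Real.exp (-(x t))) := by
    apply Finset.sum_lt_sum
    · intro l _
      rw [hterm, hterm]
      apply mul_le_mul_of_nonneg_left _ (hL l)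
      apply mul_le_mul_of_nonneg_left _ (hprodpos l).le
      exact Real.exp_le_exp.mpr (neg_le_neg (hsle l))
    · refine ⟨0, Finset.mem_univ _, ?_⟩
      rw [hterm, hterm]
      have hIic0 : Finset.Iic (0 : Fin (k+1)) = {0} := by
        ext t
        simp [Finset.mem_Iic, Fin.le_zero_iff]
      have hL0' : 0 < L 0 * ∏ t ∈ Finset.Iic (0 : Fin (k+1)), p t := by
        rw [hIic0, Finset.prod_singleton]; exact hL0
      rw [← mul_assoc, ← mul_assoc]
      exact mul_lt_mul_of_pos_left (Real.exp_lt_exp.mpr (neg_lt_neg hstrict)) hL0'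
  linarith
end
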